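/- arXiv:1804.00711 — 4 statements merged into one kernel-verified Lean document; each statement's English description precedes it below -/
import Mathlib

section
/- Let 0 < β₀ < β₁ < 2. Then there exist constants C̃ > 0 and C̄ > 0 (depending only on β₀ and β₁) such that for every β ∈ [β₀, β₁] and every real z ≥ 0 one has (C̃/β)·exp(z^{1/β}) ≤ E_{β,1}(z) ≤ (C̄/β)·exp(z^{1/β}). -/
open Real

noncomputable def mittagLeffler (β γ z : ℝ) : ℝ :=
  ∑' k : ℕ, z ^ k / Real.Gamma (β * k + γ)

/-!
With `x = z ^ (1 / β)` one has `E_{β,1}(z) = ∑ₖ x ^ (β k) / Γ(β k + 1)`. Log-convexity of `Γ` makes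
`t ↦ log (x ^ t / Γ(t + 1))` concave, so a term with `β k ∈ [n, n + 1]` is at most
`max (xⁿ⁺¹ / (n + 1)!) (2 xⁿ / n!)`, and a term with `β k ∈ [2m, 2m + 2]` is at least the smaller of
`x²ᵐ / (2m)!` and `x²ᵐ⁺² / (2m + 2)!`. A window `[n, n + 1)` contains at most `1 / β + 1` of the
points `β k`, and, as `β ≤ 2`, a window `[2m, 2m + 2)` contains at least `1 / β` of them. Comparing
with the exponential series gives `E ≤ 4 (1 / β + 1) eˣ`. For the lower bound, the even terms
`x²ᵐ / (2m)!` increase and then decrease, so the sum of the minima of consecutive even terms is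
`cosh x` minus the largest even term; for `x ≥ 1` no term of the exponential series exceeds
`(5 / 11) eˣ`, leaving at least `eˣ / 22`. For `x < 1` the term `k = 0` alone gives `E ≥ 1`.
-/

open Finset
open scoped Nat

noncomputable def powDivGamma (x t : ℝ) : ℝ := x ^ t / Gamma (t + 1)

section PowDivGamma

variable {x t : ℝ}

lemma powDivGamma_natCast (x : ℝ) (n : ℕ) : powDivGamma x n = x ^ n / n ! := by
  rw [powDivGamma, rpow_natCast, Gamma_nat_eq_factorial]

lemma powDivGamma_pos (hx : 0 < x) (ht : -1 < t) : 0 < powDivGamma x t :=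
  div_pos (rpow_pos_of_pos hx t) (Gamma_pos_of_pos (by linarith))

lemma powDivGamma_add_one (hx : x ≠ 0) (ht : t + 1 ≠ 0) :
    powDivGamma x (t + 1) = powDivGamma x t * (x / (t + 1)) := by
  rw [powDivGamma, powDivGamma, rpow_add_one hx, Gamma_add_one ht]
  field_simp

lemma concaveOn_log_powDivGamma (hx : 0 < x) :
    ConcaveOn ℝ (Set.Ioi (-1)) (fun t => log (powDivGamma x t)) := by
  have hlin : ConcaveOn ℝ (Set.Ioi (-1)) (fun t => t * log x) :=
    (LinearMap.mulRight ℝ (log x)).concaveOn (convex_Ioi _)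
  have hGamma : ConvexOn ℝ (Set.Ioi (-1)) (fun t => log (Gamma (t + 1))) := by
    simpa [Function.comp_def, add_comm, neg_lt_iff_pos_add'] using
      convexOn_log_Gamma.translate_right 1
  refine (hlin.sub hGamma).congr fun t ht => ?_
  have ht' : 0 < t + 1 := by linarith [Set.mem_Ioi.mp ht]
  rw [Pi.sub_apply, powDivGamma, log_div (rpow_pos_of_pos hx t).ne' (Gamma_pos_of_pos ht').ne',
    log_rpow hx]

lemma min_le_powDivGamma {a b : ℝ} (hx : 0 < x) (ha : -1 < a) (ht : t ∈ Set.Icc a b) :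
    min (powDivGamma x a) (powDivGamma x b) ≤ powDivGamma x t := by
  have hb : -1 < b := ha.trans_le (ht.1.trans ht.2)
  have hpos {s : ℝ} (hs : -1 < s) := powDivGamma_pos hx hs
  rcases min_le_iff.mp ((concaveOn_log_powDivGamma hx).min_le_of_mem_Icc ha hb ht) with h | h
  · exact min_le_of_left_le ((log_le_log_iff (hpos ha) (hpos (ha.trans_le ht.1))).mp h)
  · exact min_le_of_right_le ((log_le_log_iff (hpos hb) (hpos (ha.trans_le ht.1))).mp h)

lemma powDivGamma_le_max (hx : 0 < x) (n : ℕ) (ht : t ∈ Set.Icc (n : ℝ) (n + 1)) :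
    powDivGamma x t ≤ max (powDivGamma x (n + 1)) (2 * powDivGamma x n) := by
  obtain ⟨hnt, htn⟩ := ht
  rcases htn.eq_or_lt with rfl | htn
  · exact le_max_left _ _
  have hn : (0 : ℝ) ≤ n := n.cast_nonneg
  have hpos {s : ℝ} (hs : -1 < s) : 0 < powDivGamma x s := powDivGamma_pos hx hs
  have hlog_succ {s : ℝ} (hs : 0 ≤ s) :
      log (powDivGamma x (s + 1)) = log (powDivGamma x s) + (log x - log (s + 1)) := by
    rw [powDivGamma_add_one hx.ne' (by positivity), log_mul (hpos (by linarith)).ne'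
      (by positivity), log_div hx.ne' (by positivity)]
  -- log-concavity: the slope over `[t, n + 1]` is at least the slope over `[n + 1, n + 2]`
  have hslope : (n + 1 - t) * (log x - log (n + 1 + 1)) ≤
      log (powDivGamma x (n + 1)) - log (powDivGamma x t) := by
    have := (concaveOn_log_powDivGamma hx).slope_anti_adjacent (x := t) (y := n + 1)
      (z := n + 1 + 1) (Set.mem_Ioi.mpr (by linarith)) (Set.mem_Ioi.mpr (by linarith)) htn
      (by linarith)
    rwa [hlog_succ (by positivity), add_sub_cancel_left, add_sub_cancel_left, div_one,
      le_div_iff₀ (by linarith), mul_comm] at this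
  rcases le_or_gt 0 (log x - log (n + 1 + 1)) with hL | hL
  · refine le_max_of_le_left ((log_le_log_iff (hpos (by linarith)) (hpos (by linarith))).mp ?_)
    nlinarith
  · refine le_max_of_le_right ((log_le_log_iff (hpos (by linarith))
      (mul_pos two_pos (hpos (by linarith)))).mp ?_)
    have hlog2 : log (n + 1 + 1) ≤ log 2 + log (n + 1) := by
      rw [← log_mul two_ne_zero (by positivity)]
      exact log_le_log (by positivity) (by linarith)
    rw [log_mul two_ne_zero (hpos (by linarith)).ne']
    rw [hlog_succ hn] at hslope
    nlinarith

lemma powDivGamma_mul_natCast_nonneg {β : ℝ} (hx : 0 < x) (hβ : 0 ≤ β) (k : ℕ) :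
    0 ≤ powDivGamma x (β * k) :=
  (powDivGamma_pos hx (neg_one_lt_zero.trans_le (by positivity))).le

end PowDivGamma

lemma pow_div_factorial_le_mul_exp {x : ℝ} (hx : 1 ≤ x) (n : ℕ) :
    x ^ n / n ! ≤ 5 / 11 * exp x := by
  set a : ℕ → ℝ := fun j => x ^ j / (j ! : ℝ)
  have hx0 : 0 < x := by linarith
  cases n with
  | zero =>
    have := exp_one_gt_d9
    have := exp_le_exp.mpr hx
    norm_num
    linarith
  | succ m =>
    have hsum : a m + a (m + 1) + a (m + 2) ≤ exp x := by
      have hpart := sum_le_exp_of_nonneg hx0.le (m + 3)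
      have hrest : 0 ≤ ∑ i ∈ range m, a i := sum_nonneg fun i _ => by positivity
      simp only [sum_range_succ] at hpart
      linarith
    have hdown : a m = a (m + 1) * ((m + 1) / x) := by
      simp only [a, Nat.factorial_succ, pow_succ]; push_cast; field_simp
    have hup : a (m + 2) = a (m + 1) * (x / (m + 2)) := by
      simp only [a, Nat.factorial_succ, pow_succ]; push_cast; field_simp; ring
    -- the two neighbours of the `(m + 1)`-st term add up to at least `6 / 5` of it
    have hratio : 6 / 5 ≤ (m + 1) / x + x / (m + 2) := by
      rw [div_add_div _ _ hx0.ne' (by positivity), le_div_iff₀ (by positivity)]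
      nlinarith [sq_nonneg (5 * x - 3 * (m + 2))]
    have ha : 0 < a (m + 1) := by positivity
    calc a (m + 1) ≤ 5 / 11 * (a (m + 1) * (1 + ((m + 1) / x + x / (m + 2)))) := by nlinarith
      _ = 5 / 11 * (a m + a (m + 1) + a (m + 2)) := by rw [hdown, hup]; ring
      _ ≤ 5 / 11 * exp x := by linarith

lemma tsum_min_succ_eq_of_unimodal {g : ℕ → ℝ} (hg : Summable g) {m₀ : ℕ}
    (hup : ∀ m < m₀, g m ≤ g (m + 1)) (hdown : ∀ m, m₀ ≤ m → g (m + 1) ≤ g m) :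
    ∑' m, min (g m) (g (m + 1)) = ∑' m, g m - g m₀ := by
  have htail (m : ℕ) : min (g (m + m₀)) (g (m + m₀ + 1)) = g (m + (m₀ + 1)) := by
    rw [min_eq_right (hdown _ (by omega)), add_assoc]
  have hsum : Summable fun m => min (g m) (g (m + 1)) := by
    rw [← summable_nat_add_iff m₀]
    simp_rw [htail]
    exact (summable_nat_add_iff _).mpr hg
  rw [← hsum.sum_add_tsum_nat_add m₀, ← hg.sum_add_tsum_nat_add (m₀ + 1), sum_range_succ]
  simp_rw [htail]
  rw [sum_congr rfl fun m hm => min_eq_left (hup m (mem_range.mp hm))]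
  ring

lemma exp_div_le_tsum_min_even {x : ℝ} (hx : 1 ≤ x) :
    exp x / 22 ≤ ∑' m : ℕ, min (x ^ (2 * m) / (2 * m)!) (x ^ (2 * (m + 1)) / (2 * (m + 1))!) := by
  set g : ℕ → ℝ := fun m => x ^ (2 * m) / (2 * m)!
  set P : ℕ → ℝ := fun m => (2 * m + 1) * (2 * m + 2)
  have hratio (m : ℕ) : g (m + 1) * P m = g m * x ^ 2 := by
    simp only [g, P, show 2 * (m + 1) = 2 * m + 1 + 1 by ring, Nat.factorial_succ, pow_succ]
    push_cast; field_simp; ring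
  have hstep (m : ℕ) : g (m + 1) ≤ g m ↔ x ^ 2 ≤ P m := by
    rw [← mul_le_mul_iff_left₀ (show 0 < P m by positivity), hratio,
      mul_le_mul_iff_right₀ (show 0 < g m by positivity)]
  have hP : Monotone P := fun m n hmn => by
    simp only [P]; gcongr
  have hex : ∃ m, x ^ 2 ≤ P m := by
    obtain ⟨m, hm⟩ := exists_nat_ge (x ^ 2)
    exact ⟨m, hm.trans (by simp only [P]; nlinarith)⟩
  classical
  change exp x / 22 ≤ ∑' m, min (g m) (g (m + 1))
  rw [tsum_min_succ_eq_of_unimodal (hasSum_cosh x).summable (m₀ := Nat.find hex)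
    (fun m hm => (not_le.mp ((hstep m).not.mpr (Nat.find_min hex hm))).le)
    (fun m hm => (hstep m).mpr ((Nat.find_spec hex).trans (hP hm))), ← cosh_eq_tsum, cosh_eq]
  have := pow_div_factorial_le_mul_exp hx (2 * Nat.find hex)
  have := exp_pos (-x)
  linarith

lemma sum_range_eq_sum_sum_Ico {M : Type*} [AddCommMonoid M] (f : ℕ → M) {d : ℕ → ℕ}
    (hd : Monotone d) (hd0 : d 0 = 0) (N : ℕ) :
    ∑ k ∈ range (d N), f k = ∑ n ∈ range N, ∑ k ∈ Ico (d n) (d (n + 1)), f k := by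
  induction N with
  | zero => simp [hd0]
  | succ N ih =>
    rw [sum_range_succ, ← ih, range_eq_Ico, range_eq_Ico,
      sum_Ico_consecutive f (Nat.zero_le _) (hd N.le_succ)]

section CeilDivBlocks

variable {γ a b : ℝ}

lemma mem_Ico_ceil_div_iff (hγ : 0 < γ) {k : ℕ} :
    k ∈ Ico ⌈a / γ⌉₊ ⌈b / γ⌉₊ ↔ a ≤ γ * k ∧ γ * k < b := by
  rw [mem_Ico, Nat.ceil_le, Nat.lt_ceil, div_le_iff₀ hγ, lt_div_iff₀ hγ, mul_comm]

lemma card_Ico_ceil_div_lt (hγ : 0 < γ) (ha : 0 ≤ a) (hab : a ≤ b) :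
    (#(Ico ⌈a / γ⌉₊ ⌈b / γ⌉₊) : ℝ) < (b - a) / γ + 1 := by
  rw [Nat.card_Ico, Nat.cast_sub (Nat.ceil_mono (by gcongr)), sub_div]
  have := Nat.ceil_lt_add_one (div_nonneg (ha.trans hab) hγ.le)
  have := Nat.le_ceil (a / γ)
  linarith

lemma sub_one_lt_card_Ico_ceil_div (hγ : 0 < γ) (ha : 0 ≤ a) (hab : a ≤ b) :
    (b - a) / γ - 1 < #(Ico ⌈a / γ⌉₊ ⌈b / γ⌉₊) := by
  rw [Nat.card_Ico, Nat.cast_sub (Nat.ceil_mono (by gcongr)), sub_div]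
  have := Nat.ceil_lt_add_one (div_nonneg ha hγ.le)
  have := Nat.le_ceil (b / γ)
  linarith

lemma sub_div_le_two_mul_card_Ico_ceil_div (hγ : 0 < γ) (ha : 0 ≤ a) (hab : a + γ ≤ b) :
    (b - a) / γ ≤ 2 * #(Ico ⌈a / γ⌉₊ ⌈b / γ⌉₊) := by
  have hlt := sub_one_lt_card_Ico_ceil_div hγ ha (by linarith)
  have hlen : 1 ≤ (b - a) / γ := by rw [le_div_iff₀ hγ]; linarith
  have hne : (1 : ℝ) ≤ #(Ico ⌈a / γ⌉₊ ⌈b / γ⌉₊) := by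
    have : (0 : ℝ) < #(Ico ⌈a / γ⌉₊ ⌈b / γ⌉₊) := by linarith
    exact_mod_cast Nat.one_le_iff_ne_zero.mpr (by exact_mod_cast this.ne')
  linarith

end CeilDivBlocks

section Series

variable {β x : ℝ}

lemma sum_range_powDivGamma_mul_le (hβ : 0 < β) (hx : 0 < x) (K : ℕ) :
    ∑ k ∈ range K, powDivGamma x (β * k) ≤ 4 * (1 / β + 1) * exp x := by
  set f : ℕ → ℝ := fun k => powDivGamma x (β * k)
  set d : ℕ → ℕ := fun n => ⌈(n : ℝ) / β⌉₊
  have hd : Monotone d := fun m n hmn => Nat.ceil_mono (by gcongr)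
  have hf (k : ℕ) : 0 ≤ f k := powDivGamma_mul_natCast_nonneg hx hβ.le k
  have hKN : K ≤ d ⌈β * K⌉₊ := by
    have : (K : ℝ) ≤ ⌈β * K⌉₊ / β := by
      rw [le_div_iff₀ hβ, mul_comm]
      exact Nat.le_ceil _
    exact_mod_cast this.trans (Nat.le_ceil _)
  have hblock (n : ℕ) : ∑ k ∈ Ico (d n) (d (n + 1)), f k ≤
      (1 / β + 1) * (2 * (x ^ n / n ! + x ^ (n + 1) / (n + 1)!)) := by
    have hterm : ∀ k ∈ Ico (d n) (d (n + 1)), f k ≤ 2 * (x ^ n / n ! + x ^ (n + 1) / (n + 1)!) := by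
      intro k hk
      rw [mem_Ico_ceil_div_iff hβ, Nat.cast_succ] at hk
      refine (powDivGamma_le_max hx n ⟨hk.1, hk.2.le⟩).trans ?_
      rw [← Nat.cast_add_one, powDivGamma_natCast, powDivGamma_natCast]
      have : (0 : ℝ) ≤ x ^ n / (n ! : ℝ) := by positivity
      have : (0 : ℝ) ≤ x ^ (n + 1) / ((n + 1)! : ℝ) := by positivity
      exact max_le (by linarith) (by linarith)
    have hcard : (#(Ico (d n) (d (n + 1))) : ℝ) < 1 / β + 1 := by
      have := card_Ico_ceil_div_lt hβ n.cast_nonneg (Nat.cast_le.mpr n.le_succ)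
      rwa [show ((n + 1 : ℕ) : ℝ) - n = 1 by push_cast; ring] at this
    calc ∑ k ∈ Ico (d n) (d (n + 1)), f k
        ≤ #(Ico (d n) (d (n + 1))) • (2 * (x ^ n / n ! + x ^ (n + 1) / (n + 1)!)) :=
          sum_le_card_nsmul _ _ _ hterm
      _ ≤ _ := by
          rw [nsmul_eq_mul]
          gcongr
  have hexp (N : ℕ) : ∑ n ∈ range N, x ^ (n + 1) / (n + 1)! ≤ exp x := by
    have := sum_le_exp_of_nonneg hx.le (N + 1)
    rw [sum_range_succ'] at this
    linarith [show 0 ≤ x ^ 0 / (0 ! : ℝ) by positivity]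
  calc ∑ k ∈ range K, f k ≤ ∑ k ∈ range (d ⌈β * K⌉₊), f k :=
        sum_le_sum_of_subset_of_nonneg (range_subset_range.mpr hKN) fun k _ _ => hf k
    _ = ∑ n ∈ range ⌈β * K⌉₊, ∑ k ∈ Ico (d n) (d (n + 1)), f k :=
        sum_range_eq_sum_sum_Ico f hd (by simp [d]) _
    _ ≤ ∑ n ∈ range ⌈β * K⌉₊, (1 / β + 1) * (2 * (x ^ n / n ! + x ^ (n + 1) / (n + 1)!)) :=
        sum_le_sum fun n _ => hblock n
    _ ≤ 4 * (1 / β + 1) * exp x := by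
        rw [← mul_sum, ← mul_sum, sum_add_distrib]
        have := sum_le_exp_of_nonneg hx.le ⌈β * K⌉₊
        have := hexp ⌈β * K⌉₊
        have : 0 < 1 / β + 1 := by positivity
        nlinarith

lemma summable_powDivGamma_mul (hβ : 0 < β) (hx : 0 < x) :
    Summable fun k : ℕ => powDivGamma x (β * k) :=
  summable_of_sum_range_le (powDivGamma_mul_natCast_nonneg hx hβ.le)
    (sum_range_powDivGamma_mul_le hβ hx)

lemma tsum_min_even_le_mul_tsum (hβ : 0 < β) (hβ2 : β ≤ 2) (hx : 0 < x) :
    ∑' m : ℕ, min (x ^ (2 * m) / (2 * m)!) (x ^ (2 * (m + 1)) / (2 * (m + 1))!) ≤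
      β * ∑' k : ℕ, powDivGamma x (β * k) := by
  set f : ℕ → ℝ := fun k => powDivGamma x (β * k)
  set b : ℕ → ℝ := fun m => min (x ^ (2 * m) / (2 * m)!) (x ^ (2 * (m + 1)) / (2 * (m + 1))!)
  set d : ℕ → ℕ := fun m => ⌈((2 * m : ℕ) : ℝ) / β⌉₊
  have hd : Monotone d := fun m n hmn => Nat.ceil_mono (by gcongr)
  have hf (k : ℕ) : 0 ≤ f k := powDivGamma_mul_natCast_nonneg hx hβ.le k
  have hb (m : ℕ) : 0 ≤ b m := le_min (by positivity) (by positivity)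
  have hblock (m : ℕ) : b m ≤ β * ∑ k ∈ Ico (d m) (d (m + 1)), f k := by
    have hterm : ∀ k ∈ Ico (d m) (d (m + 1)), b m ≤ f k := by
      intro k hk
      rw [mem_Ico_ceil_div_iff hβ] at hk
      have := min_le_powDivGamma hx (neg_one_lt_zero.trans_le (Nat.cast_nonneg _))
        ⟨hk.1, hk.2.le⟩
      rwa [powDivGamma_natCast, powDivGamma_natCast] at this
    have hcard : 1 ≤ β * #(Ico (d m) (d (m + 1))) := by
      have := sub_div_le_two_mul_card_Ico_ceil_div hβ (Nat.cast_nonneg (2 * m))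
        (show ((2 * m : ℕ) : ℝ) + β ≤ (2 * (m + 1) : ℕ) by push_cast; linarith)
      rw [show ((2 * (m + 1) : ℕ) : ℝ) - (2 * m : ℕ) = 2 by push_cast; ring,
        div_le_iff₀ hβ] at this
      linarith
    calc b m ≤ β * #(Ico (d m) (d (m + 1))) * b m := le_mul_of_one_le_left (hb m) hcard
      _ = β * (#(Ico (d m) (d (m + 1))) • b m) := by rw [nsmul_eq_mul]; ring
      _ ≤ β * ∑ k ∈ Ico (d m) (d (m + 1)), f k := by gcongr; exact card_nsmul_le_sum _ _ _ hterm
  refine tsum_le_of_sum_range_le hb fun M => ?_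
  calc ∑ m ∈ range M, b m ≤ ∑ m ∈ range M, β * ∑ k ∈ Ico (d m) (d (m + 1)), f k :=
        sum_le_sum fun m _ => hblock m
    _ = β * ∑ k ∈ range (d M), f k := by
        rw [← mul_sum, sum_range_eq_sum_sum_Ico f hd (by simp [d])]
    _ ≤ β * ∑' k, f k := by
        gcongr
        exact (summable_powDivGamma_mul hβ hx).sum_le_tsum _ fun k _ => hf k

end Series

section MittagLeffler

variable {β z : ℝ}

lemma mittagLeffler_zero (β γ : ℝ) : mittagLeffler β γ 0 = (Gamma γ)⁻¹ := by
  rw [mittagLeffler, tsum_eq_single 0 fun k hk => by simp [hk]]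
  simp

lemma mittagLeffler_one_eq_tsum (hβ : β ≠ 0) (hz : 0 ≤ z) :
    mittagLeffler β 1 z = ∑' k : ℕ, powDivGamma (z ^ (1 / β)) (β * k) := by
  refine tsum_congr fun k => ?_
  rw [powDivGamma, ← rpow_mul hz, show 1 / β * (β * k) = k by field_simp, rpow_natCast]

lemma mittagLeffler_one_le (hβ : 0 < β) (hβ2 : β ≤ 2) (hz : 0 ≤ z) :
    mittagLeffler β 1 z ≤ 12 / β * exp (z ^ (1 / β)) := by
  rcases hz.eq_or_lt with rfl | hz
  · rw [mittagLeffler_zero, Gamma_one, zero_rpow (by positivity), exp_zero, inv_one, mul_one,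
      le_div_iff₀ hβ]
    linarith
  have hx : 0 < z ^ (1 / β) := rpow_pos_of_pos hz _
  rw [mittagLeffler_one_eq_tsum hβ.ne' hz.le]
  refine (tsum_le_of_sum_range_le (powDivGamma_mul_natCast_nonneg hx hβ.le)
    (sum_range_powDivGamma_mul_le hβ hx)).trans ?_
  gcongr
  rw [le_div_iff₀ hβ]
  field_simp
  linarith

lemma one_le_mittagLeffler_one (hβ : 0 < β) (hz : 0 ≤ z) : 1 ≤ mittagLeffler β 1 z := by
  rcases hz.eq_or_lt with rfl | hz
  · simp [mittagLeffler_zero]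
  have hx : 0 < z ^ (1 / β) := rpow_pos_of_pos hz _
  rw [mittagLeffler_one_eq_tsum hβ.ne' hz.le]
  refine le_trans (le_of_eq ?_) ((summable_powDivGamma_mul hβ hx).le_tsum 0 fun k _ =>
    powDivGamma_mul_natCast_nonneg hx hβ.le k)
  simp [powDivGamma]

lemma exp_div_le_mittagLeffler_one (hβ : 0 < β) (hβ2 : β ≤ 2) (hz : 1 ≤ z) :
    exp (z ^ (1 / β)) / (22 * β) ≤ mittagLeffler β 1 z := by
  have hx : 1 ≤ z ^ (1 / β) := one_le_rpow hz (by positivity)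
  have h1 := exp_div_le_tsum_min_even hx
  have h2 := tsum_min_even_le_mul_tsum hβ hβ2 (zero_lt_one.trans_le hx)
  rw [mittagLeffler_one_eq_tsum hβ.ne' (zero_le_one.trans hz), div_le_iff₀ (by positivity)]
  linarith

end MittagLeffler

theorem mittagLeffler_one_bounds_general (β₀ β₁ : ℝ) (hβ₀ : 0 < β₀) (hβ₁ : β₁ < 2) :
    ∃ Ctilde Cbar : ℝ, 0 < Ctilde ∧ 0 < Cbar ∧
      ∀ β ∈ Set.Icc β₀ β₁, ∀ z : ℝ, 0 ≤ z →
        (Ctilde / β) * Real.exp (z ^ (1 / β)) ≤ mittagLeffler β 1 z ∧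
        mittagLeffler β 1 z ≤ (Cbar / β) * Real.exp (z ^ (1 / β)) := by
  refine ⟨min (1 / 22) (β₀ / 3), 12, by positivity, by norm_num, ?_⟩
  rintro β ⟨hβ₀β, hββ₁⟩ z hz
  have hβ : 0 < β := hβ₀.trans_le hβ₀β
  have hβ2 : β ≤ 2 := by linarith
  refine ⟨?_, mittagLeffler_one_le hβ hβ2 hz⟩
  rcases le_or_gt 1 z with hz1 | hz1
  · calc min (1 / 22) (β₀ / 3) / β * exp (z ^ (1 / β))
        ≤ 1 / 22 / β * exp (z ^ (1 / β)) := by gcongr; exact min_le_left _ _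
      _ = exp (z ^ (1 / β)) / (22 * β) := by ring
      _ ≤ mittagLeffler β 1 z := exp_div_le_mittagLeffler_one hβ hβ2 hz1
  · have hexp : exp (z ^ (1 / β)) ≤ 3 := by
      have := exp_le_exp.mpr (rpow_le_one hz hz1.le (by positivity : 0 ≤ 1 / β))
      linarith [exp_one_lt_d9]
    calc min (1 / 22) (β₀ / 3) / β * exp (z ^ (1 / β)) ≤ β₀ / 3 / β * 3 := by
          gcongr; exact min_le_right _ _
      _ ≤ 1 := by rw [div_div, div_mul_eq_mul_div, div_le_one (by positivity)]; linarith
      _ ≤ mittagLeffler β 1 z := one_le_mittagLeffler_one hβ hz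

/-- for `0 < β₀ < β₁ < 2` there are constants `C̃, C̄ > 0` (depending only
on `β₀, β₁`) with `(C̃/β)·exp(z^{1/β}) ≤ E_{β,1}(z) ≤ (C̄/β)·exp(z^{1/β})` for all
`β ∈ [β₀, β₁]` and all `z ≥ 0`. -/
theorem mittagLeffler_one_bounds (β₀ β₁ : ℝ) (hβ₀ : 0 < β₀) (hβ₀₁ : β₀ < β₁) (hβ₁ : β₁ < 2) :
    ∃ Ctilde Cbar : ℝ, 0 < Ctilde ∧ 0 < Cbar ∧
      ∀ β ∈ Set.Icc β₀ β₁, ∀ z : ℝ, 0 ≤ z →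
        (Ctilde / β) * Real.exp (z ^ (1 / β)) ≤ mittagLeffler β 1 z ∧
        mittagLeffler β 1 z ≤ (Cbar / β) * Real.exp (z ^ (1 / β)) :=
  mittagLeffler_one_bounds_general β₀ β₁ hβ₀ hβ₁
end

section
/- Let 0 < β < 2, a > 0 and λ₁ > 0. Then there exists a constant C₂ > 0 (depending only on β, a, λ₁) such that for every λ ≥ λ₁ and every t ∈ [0, a] one has t · E_{β,2}(λ t^β) ≤ C₂ · (1 + λ^{−1/β}) · exp(λ^{1/β} t). -/
open Real

/-- Fibers of `k ↦ ⌊β k + 1⌋₊` have at most `⌊1/β⌋₊ + 1` elements. -/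
lemma ml_fiber_card_le (β : ℝ) (hβ : 0 < β) (K n : ℕ) :
    ({k ∈ Finset.range K | ⌊β * k + 1⌋₊ = n} : Finset ℕ).card ≤ ⌊1/β⌋₊ + 1 := by
  set c := ⌈((n : ℝ) - 1) / β⌉₊ with hc
  have hsub : ({k ∈ Finset.range K | ⌊β * k + 1⌋₊ = n} : Finset ℕ) ⊆
      Finset.Ico c (c + (⌊1/β⌋₊ + 1)) := by
    intro k hk
    simp only [Finset.mem_filter, Finset.mem_range] at hk
    obtain ⟨-, hk⟩ := hk
    have h1 : (n : ℝ) ≤ β * k + 1 := by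
      rw [← hk]; exact Nat.floor_le (by positivity)
    have h2 : β * k + 1 < n + 1 := by
      rw [← hk]; exact Nat.lt_floor_add_one _
    have hck : c ≤ k := by
      rw [hc]
      exact Nat.ceil_le.mpr (by rw [div_le_iff₀ hβ]; nlinarith)
    have hkc : (k : ℝ) < c + 1 / β := by
      have hcl : ((n : ℝ) - 1) / β ≤ c := Nat.le_ceil _
      have hk2 : (k : ℝ) < n / β := by rw [lt_div_iff₀ hβ]; nlinarith
      have : (n : ℝ) / β = ((n : ℝ) - 1) / β + 1 / β := by ring
      linarith
    refine Finset.mem_Ico.mpr ⟨hck, ?_⟩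
    have hsub' : ((k - c : ℕ) : ℝ) ≤ 1 / β := by
      rw [Nat.cast_sub hck]; linarith
    have := Nat.le_floor hsub'
    omega
  calc ({k ∈ Finset.range K | ⌊β * k + 1⌋₊ = n} : Finset ℕ).card
      ≤ (Finset.Ico c (c + (⌊1/β⌋₊ + 1))).card := Finset.card_le_card hsub
    _ = ⌊1/β⌋₊ + 1 := by rw [Nat.card_Ico]; omega

/-- Core pointwise bound: `s^x / Γ(x+1) ≤ 2 (s^m/m! + s^(m+1)/(m+1)!)` for `m = ⌊x⌋`. -/
lemma ml_term_bound (s x : ℝ) (hs : 0 < s) (hx : 1 ≤ x) :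
    s ^ x / Real.Gamma (x + 1) ≤
      2 * (s ^ (⌊x⌋₊ : ℕ) / (Nat.factorial ⌊x⌋₊) + s ^ ((⌊x⌋₊ : ℕ) + 1) / (Nat.factorial (⌊x⌋₊ + 1))) := by
  set m : ℕ := ⌊x⌋₊ with hm
  set μ : ℝ := (m : ℝ) with hμ
  have hμx : μ ≤ x := Nat.floor_le (by linarith)
  have hxμ : x < μ + 1 := Nat.lt_floor_add_one x
  have hμ1 : (1 : ℝ) ≤ μ := by
    have h1m : (1 : ℕ) ≤ m := Nat.le_floor (by exact_mod_cast hx)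
    rw [hμ]; exact_mod_cast h1m
  set f : ℝ := x - μ with hf
  have hf0 : 0 ≤ f := by simp only [hf]; linarith
  have hf1 : f < 1 := by simp only [hf]; linarith
  have hx1 : (0 : ℝ) < x + 1 := by linarith
  have hμ1pos : (0 : ℝ) < μ + 1 := by linarith
  have hΓx1 : 0 < Real.Gamma (x + 1) := Real.Gamma_pos_of_pos hx1
  have hΓμ1 : 0 < Real.Gamma (μ + 1) := Real.Gamma_pos_of_pos (by linarith)
  have hΓμ2 : 0 < Real.Gamma (μ + 2) := Real.Gamma_pos_of_pos (by linarith)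
  -- Step A: log-convexity of Γ
  have hA : Real.Gamma (μ + 2) ≤ Real.Gamma (x + 1) * (x + 1) ^ (1 - f) := by
    have hcvx := Real.convexOn_log_Gamma.2 (Set.mem_Ioi.mpr hx1)
      (Set.mem_Ioi.mpr (by linarith : (0:ℝ) < x + 2)) hf0 (by linarith : (0:ℝ) ≤ 1 - f)
      (by ring)
    have hcomb : f • (x + 1) + (1 - f) • (x + 2) = μ + 2 := by
      simp only [smul_eq_mul, hf]; ring
    rw [hcomb] at hcvx
    simp only [Function.comp, smul_eq_mul] at hcvx
    have hΓ21 : Real.Gamma (x + 2) = (x + 1) * Real.Gamma (x + 1) := by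
      rw [show x + 2 = (x + 1) + 1 by ring, Real.Gamma_add_one (ne_of_gt hx1)]
    rw [hΓ21, Real.log_mul (ne_of_gt hx1) (ne_of_gt hΓx1)] at hcvx
    have hle : Real.log (Real.Gamma (μ + 2)) ≤
        Real.log (Real.Gamma (x + 1)) + (1 - f) * Real.log (x + 1) := by nlinarith
    calc Real.Gamma (μ + 2) = Real.exp (Real.log (Real.Gamma (μ + 2))) :=
          (Real.exp_log hΓμ2).symm
      _ ≤ Real.exp (Real.log (Real.Gamma (x + 1)) + (1 - f) * Real.log (x + 1)) :=
          Real.exp_le_exp.mpr hle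
      _ = Real.Gamma (x + 1) * (x + 1) ^ (1 - f) := by
          rw [Real.exp_add, Real.exp_log hΓx1, Real.rpow_def_of_pos hx1]
          ring_nf
  -- Step B
  have hB : s ^ x / Real.Gamma (x + 1) ≤ s ^ x * (x + 1) ^ (1 - f) / Real.Gamma (μ + 2) := by
    rw [div_le_div_iff₀ hΓx1 hΓμ2]
    have hsx : (0 : ℝ) ≤ s ^ x := Real.rpow_nonneg hs.le x
    calc s ^ x * Real.Gamma (μ + 2) ≤ s ^ x * (Real.Gamma (x + 1) * (x + 1) ^ (1 - f)) :=
          mul_le_mul_of_nonneg_left hA hsx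
      _ = s ^ x * (x + 1) ^ (1 - f) * Real.Gamma (x + 1) := by ring
  -- abbreviations
  set A : ℝ := s ^ μ / Real.Gamma (μ + 1) with hA'
  set B : ℝ := s ^ (μ + 1) / Real.Gamma (μ + 2) with hB'
  have hApos : 0 < A := div_pos (Real.rpow_pos_of_pos hs μ) hΓμ1
  have hBpos : 0 < B := div_pos (Real.rpow_pos_of_pos hs (μ + 1)) hΓμ2
  set L : ℝ := Real.log s with hL
  have hsL : ∀ y : ℝ, s ^ y = Real.exp (L * y) := fun y => Real.rpow_def_of_pos hs y
  have hΓ2 : Real.Gamma (μ + 2) = (μ + 1) * Real.Gamma (μ + 1) := by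
    rw [show μ + 2 = (μ + 1) + 1 by ring, Real.Gamma_add_one (ne_of_gt hμ1pos)]
  -- Step C : s^x (x+1)^(1-f) / Γ(μ+2) ≤ 2 * (A^(1-f) * B^f)
  have hC : s ^ x * (x + 1) ^ (1 - f) / Real.Gamma (μ + 2) ≤
      2 * (A ^ (1 - f) * B ^ f) := by
    have hAexp : A = Real.exp (L * μ - Real.log (Real.Gamma (μ + 1))) := by
      rw [hA', hsL μ, Real.exp_sub, Real.exp_log hΓμ1]
    have hBexp : B = Real.exp (L * (μ + 1) - Real.log (μ + 1)
        - Real.log (Real.Gamma (μ + 1))) := by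
      rw [hB', hsL (μ + 1), hΓ2, Real.exp_sub, Real.exp_sub, Real.exp_log hΓμ1,
        Real.exp_log hμ1pos]
      field_simp
    have hAB : A ^ (1 - f) * B ^ f =
        Real.exp (L * x - Real.log (Real.Gamma (μ + 1)) - f * Real.log (μ + 1)) := by
      rw [hAexp, hBexp, ← Real.exp_mul, ← Real.exp_mul, ← Real.exp_add]
      congr 1
      have hxm : x = μ + f := by rw [hf]; ring
      rw [hxm]; ring
    have hlhs : s ^ x * (x + 1) ^ (1 - f) / Real.Gamma (μ + 2) =
        Real.exp (L * x - Real.log (Real.Gamma (μ + 1)) - f * Real.log (μ + 1))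
          * Real.exp ((1 - f) * (Real.log (x + 1) - Real.log (μ + 1))) := by
      rw [hsL x, Real.rpow_def_of_pos hx1, hΓ2]
      rw [show (μ + 1) * Real.Gamma (μ + 1) =
        Real.exp (Real.log (μ + 1) + Real.log (Real.Gamma (μ + 1))) from by
          rw [Real.exp_add, Real.exp_log hμ1pos, Real.exp_log hΓμ1]]
      rw [← Real.exp_add, ← Real.exp_sub, ← Real.exp_add]
      congr 1
      ring
    have hfac : Real.exp ((1 - f) * (Real.log (x + 1) - Real.log (μ + 1))) ≤ 2 := by
      have hbase : (1 : ℝ) ≤ (x + 1) / (μ + 1) := by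
        rw [le_div_iff₀ hμ1pos]; linarith
      have heq : Real.exp ((1 - f) * (Real.log (x + 1) - Real.log (μ + 1))) =
          ((x + 1) / (μ + 1)) ^ (1 - f) := by
        rw [Real.rpow_def_of_pos (by linarith : (0:ℝ) < (x + 1) / (μ + 1)),
          Real.log_div (ne_of_gt hx1) (ne_of_gt hμ1pos)]
        ring_nf
      rw [heq]
      calc ((x + 1) / (μ + 1)) ^ (1 - f) ≤ ((x + 1) / (μ + 1)) ^ (1 : ℝ) :=
            Real.rpow_le_rpow_of_exponent_le hbase (by linarith)
        _ = (x + 1) / (μ + 1) := Real.rpow_one _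
        _ ≤ 2 := by rw [div_le_iff₀ hμ1pos]; linarith
    rw [hlhs, hAB]
    have hE : (0:ℝ) < Real.exp (L * x - Real.log (Real.Gamma (μ + 1)) - f * Real.log (μ + 1)) :=
      Real.exp_pos _
    nlinarith
  -- geometric mean ≤ arithmetic mean
  have hGM : A ^ (1 - f) * B ^ f ≤ A + B := by
    have := Real.geom_mean_le_arith_mean2_weighted (by linarith : (0:ℝ) ≤ 1 - f) hf0
      hApos.le hBpos.le (by ring)
    nlinarith
  -- convert A, B to factorial form
  have hAval : A = s ^ (m : ℕ) / (Nat.factorial m) := by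
    rw [hA', hμ, ← Real.rpow_natCast s m, Real.Gamma_nat_eq_factorial]
  have hBval : B = s ^ ((m : ℕ) + 1) / (Nat.factorial (m + 1)) := by
    rw [hB', hμ]
    have h1 : ((m : ℝ) + 1) = ((m + 1 : ℕ) : ℝ) := by push_cast; ring
    have h2 : ((m : ℝ) + 2) = ((m + 1 : ℕ) : ℝ) + 1 := by push_cast; ring
    rw [h1, h2, ← Real.rpow_natCast s (m + 1), Real.Gamma_nat_eq_factorial]
  calc s ^ x / Real.Gamma (x + 1)
      ≤ s ^ x * (x + 1) ^ (1 - f) / Real.Gamma (μ + 2) := hB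
    _ ≤ 2 * (A ^ (1 - f) * B ^ f) := hC
    _ ≤ 2 * (A + B) := by linarith
    _ = 2 * (s ^ (m : ℕ) / (Nat.factorial m) + s ^ ((m : ℕ) + 1) / (Nat.factorial (m + 1))) := by
        rw [hAval, hBval]

/-- Key lemma: `∑ₖ s^{βk+1}/Γ(βk+2) ≤ C e^s`. -/
lemma ml_key (β : ℝ) (hβ : 0 < β) :
    ∃ C : ℝ, 0 < C ∧ ∀ s : ℝ, 0 ≤ s →
      ∑' k : ℕ, s * (s ^ β) ^ k / Real.Gamma (β * k + 2) ≤ C * Real.exp s := by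
  set N : ℕ := ⌊1/β⌋₊ + 1 with hN
  refine ⟨4 * N, by positivity, fun s hs => ?_⟩
  rcases eq_or_lt_of_le hs with h0 | hs
  · simp only [← h0, zero_mul, zero_div, tsum_zero]
    positivity
  have hΓpos : ∀ k : ℕ, 0 < Real.Gamma (β * k + 2) := fun k =>
    Real.Gamma_pos_of_pos (by positivity)
  apply Real.tsum_le_of_sum_range_le
  · intro k
    have := hΓpos k
    positivity
  intro K
  set g : ℕ → ℝ := fun n => s ^ n / (Nat.factorial n) + s ^ (n + 1) / (Nat.factorial (n + 1)) with hg
  have hgnonneg : ∀ n, 0 ≤ g n := by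
    intro n
    have h1 : (0:ℝ) < Nat.factorial n := by positivity
    have h2 : (0:ℝ) < Nat.factorial (n + 1) := by positivity
    positivity
  have hgsum : ∀ T : Finset ℕ, ∑ n ∈ T, g n ≤ 2 * Real.exp s := by
    intro T
    obtain ⟨M, hM⟩ := T.exists_nat_subset_range
    calc ∑ n ∈ T, g n ≤ ∑ n ∈ Finset.range M, g n :=
          Finset.sum_le_sum_of_subset_of_nonneg hM fun n _ _ => hgnonneg n
      _ = (∑ n ∈ Finset.range M, s ^ n / (Nat.factorial n)) +
          ∑ n ∈ Finset.range M, s ^ (n + 1) / (Nat.factorial (n + 1)) := Finset.sum_add_distrib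
      _ ≤ Real.exp s + Real.exp s := by
          have h1 := Real.sum_le_exp_of_nonneg hs.le M
          have h2 := Real.sum_le_exp_of_nonneg hs.le (M + 1)
          have h3 := Finset.sum_range_succ' (fun n => s ^ n / (Nat.factorial n : ℝ)) M
          simp only [pow_zero, Nat.factorial_zero, Nat.cast_one] at h3
          have : ∑ n ∈ Finset.range M, s ^ (n + 1) / (Nat.factorial (n + 1)) ≤ Real.exp s := by
            rw [h3] at h2
            linarith
          linarith
      _ = 2 * Real.exp s := by ring
  calc ∑ k ∈ Finset.range K, s * (s ^ β) ^ k / Real.Gamma (β * k + 2)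
      ≤ ∑ k ∈ Finset.range K, 2 * g ⌊β * k + 1⌋₊ := by
        apply Finset.sum_le_sum
        intro k _
        have hx : (1 : ℝ) ≤ β * k + 1 := by
          have : (0:ℝ) ≤ β * k := by positivity
          linarith
        have heq : s * (s ^ β) ^ k / Real.Gamma (β * k + 2) =
            s ^ (β * k + 1) / Real.Gamma ((β * k + 1) + 1) := by
          rw [show (β * (k:ℝ) + 1) + 1 = β * k + 2 by ring]
          congr 1
          rw [← Real.rpow_natCast (s ^ β) k, ← Real.rpow_mul hs.le,
            Real.rpow_add hs, Real.rpow_one]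
          ring
        rw [heq]
        exact ml_term_bound s (β * k + 1) hs hx
    _ = 2 * ∑ k ∈ Finset.range K, g ⌊β * k + 1⌋₊ := by rw [Finset.mul_sum]
    _ ≤ 2 * (N * (2 * Real.exp s)) := by
        have hsum : ∑ k ∈ Finset.range K, g ⌊β * k + 1⌋₊ ≤ (N : ℝ) * (2 * Real.exp s) := by
          rw [Finset.sum_comp g (fun k : ℕ => ⌊β * k + 1⌋₊)]
          have hstep : ∑ n ∈ (Finset.range K).image (fun k : ℕ => ⌊β * k + 1⌋₊),
              ({k ∈ Finset.range K | ⌊β * k + 1⌋₊ = n} : Finset ℕ).card • g n ≤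
              ∑ n ∈ (Finset.range K).image (fun k : ℕ => ⌊β * k + 1⌋₊), (N : ℝ) * g n := by
            apply Finset.sum_le_sum
            intro n _
            rw [nsmul_eq_mul]
            apply mul_le_mul_of_nonneg_right _ (hgnonneg n)
            exact_mod_cast ml_fiber_card_le β hβ K n
          calc ∑ n ∈ (Finset.range K).image (fun k : ℕ => ⌊β * k + 1⌋₊),
                ({k ∈ Finset.range K | ⌊β * k + 1⌋₊ = n} : Finset ℕ).card • g n
              ≤ ∑ n ∈ (Finset.range K).image (fun k : ℕ => ⌊β * k + 1⌋₊), (N : ℝ) * g n :=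
                hstep
            _ = (N : ℝ) * ∑ n ∈ (Finset.range K).image (fun k : ℕ => ⌊β * k + 1⌋₊), g n := by
                rw [Finset.mul_sum]
            _ ≤ (N : ℝ) * (2 * Real.exp s) :=
                mul_le_mul_of_nonneg_left (hgsum _) (by positivity)
        linarith
    _ = 4 * N * Real.exp s := by ring

/-- for `0 < β < 2`, `a > 0`, `λ₁ > 0` there is `C₂ > 0` (depending only on
`β, a, λ₁`) with `t · E_{β,2}(λ t^β) ≤ C₂ · (1 + λ^{−1/β}) · exp(λ^{1/β} t)` for all
`λ ≥ λ₁`, `t ∈ [0,a]`. -/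
theorem mittagLeffler_two_upper_bound (β a lam₁ : ℝ) (hβ0 : 0 < β) (hβ2 : β < 2)
    (ha : 0 < a) (hlam₁ : 0 < lam₁) :
    ∃ C₂ : ℝ, 0 < C₂ ∧ ∀ lam : ℝ, lam₁ ≤ lam → ∀ t ∈ Set.Icc (0 : ℝ) a,
      t * mittagLeffler β 2 (lam * t ^ β) ≤
        C₂ * (1 + lam ^ (-(1 / β))) * Real.exp (lam ^ (1 / β) * t) := by
  obtain ⟨C, hC, hkey⟩ := ml_key β hβ0
  refine ⟨C, hC, fun lam hlam t ht => ?_⟩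
  obtain ⟨ht0, -⟩ := ht
  have hlampos : 0 < lam := lt_of_lt_of_le hlam₁ hlam
  set w : ℝ := lam ^ (-(1 / β)) with hw
  set s : ℝ := lam ^ (1 / β) * t with hs
  have hspos : 0 ≤ s := by
    have := Real.rpow_nonneg hlampos.le (1 / β)
    positivity
  have hwpos : 0 < w := Real.rpow_pos_of_pos hlampos _
  have hsb : s ^ β = lam * t ^ β := by
    rw [hs, Real.mul_rpow (Real.rpow_nonneg hlampos.le _) ht0,
      ← Real.rpow_mul hlampos.le, one_div_mul_cancel (ne_of_gt hβ0), Real.rpow_one]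
  have hts : w * s = t := by
    rw [hw, hs, ← mul_assoc, ← Real.rpow_add hlampos,
      show -(1 / β) + 1 / β = 0 by ring, Real.rpow_zero, one_mul]
  have h1 : t * mittagLeffler β 2 (lam * t ^ β) =
      w * ∑' k : ℕ, s * (s ^ β) ^ k / Real.Gamma (β * k + 2) := by
    rw [← tsum_mul_left, mittagLeffler, ← tsum_mul_left]
    apply tsum_congr
    intro k
    rw [← hsb, ← hts]
    ring
  rw [h1]
  have h2 : w * (∑' k : ℕ, s * (s ^ β) ^ k / Real.Gamma (β * k + 2)) ≤
      w * (C * Real.exp s) :=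
    mul_le_mul_of_nonneg_left (hkey s hspos) hwpos.le
  have h3 : w * (C * Real.exp s) ≤ C * (1 + w) * Real.exp s := by
    have := Real.exp_pos s
    nlinarith
  calc w * (∑' k : ℕ, s * (s ^ β) ^ k / Real.Gamma (β * k + 2))
      ≤ w * (C * Real.exp s) := h2
    _ ≤ C * (1 + w) * Real.exp s := h3
end

section
/- Let 1 < β < 2, a > 0 and λ₁ > 0. Then there exists a constant C₃ > 0 (depending only on β, a, λ₁) such that for every λ ≥ λ₁ and every t ∈ [0, a] one has t^{β−1} · E_{β,β}(λ t^β) ≤ C₃ · exp(λ^{1/β} t). -/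
/-!
Put `x = λ^{1/β} t`. Then `t^{β-1} E_{β,β}(λ t^β) = λ^{(1-β)/β} ∑ₖ x^{sₖ} / Γ(sₖ + 1)` with
`sₖ = βk + β - 1`. Writing `s = m + θ` with `m = ⌊s⌋`, log-convexity of `Γ` gives
`Γ(s + 2) ≥ (m + 1)! (m + 1)^θ`, and Bernoulli's inequality then bounds each term by
`2 (x^m / m! + x^{m+1} / (m+1)!)`. As `β ≥ 1`, the floors `⌊sₖ⌋` are pairwise distinct, so the
series is at most `4 eˣ`; finally `λ^{(1-β)/β} ≤ λ₁^{(1-β)/β}`.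
-/

open Real Nat

theorem Real.Gamma_mul_rpow_le_Gamma_nat_add {n : ℕ} (hn : 2 ≤ n) {x : ℝ} (hx : 0 ≤ x) :
    Gamma n * ((n : ℝ) - 1) ^ x ≤ Gamma (n + x) := by
  rcases hx.eq_or_lt with rfl | hx
  · simp
  have hfeq : ∀ {y : ℝ}, 0 < y → (log ∘ Gamma) (y + 1) = (log ∘ Gamma) y + log y := by
    intro y hy
    simp only [Function.comp, Gamma_add_one hy.ne', log_mul hy.ne' (Gamma_pos_of_pos hy).ne']
    ring
  have hlog := BohrMollerup.f_add_nat_ge convexOn_log_Gamma hfeq hn hx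
  have hn1 : (0 : ℝ) < n - 1 := by
    have : (2 : ℝ) ≤ n := by exact_mod_cast hn
    linarith
  have hGn : 0 < Gamma n := Gamma_pos_of_pos (by linarith)
  calc Gamma n * ((n : ℝ) - 1) ^ x
      = exp ((log ∘ Gamma) n + x * log (n - 1)) := by
        rw [exp_add, Function.comp, exp_log hGn, rpow_def_of_pos hn1, mul_comm x]
    _ ≤ exp ((log ∘ Gamma) (n + x)) := exp_le_exp.mpr hlog
    _ = Gamma (n + x) := exp_log (Gamma_pos_of_pos (by linarith))

theorem rpow_div_Gamma_add_one_le {x s : ℝ} (hx : 0 ≤ x) (hs : 0 ≤ s) :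
    x ^ s / Gamma (s + 1) ≤ 2 * (x ^ ⌊s⌋₊ / (⌊s⌋₊)! + x ^ (⌊s⌋₊ + 1) / (⌊s⌋₊ + 1)!) := by
  set m := ⌊s⌋₊
  set θ := s - m with hθ
  have hθ0 : 0 ≤ θ := sub_nonneg.mpr (Nat.floor_le hs)
  have hθ1 : θ ≤ 1 := by linarith [Nat.lt_floor_add_one s]
  have hm1 : (0 : ℝ) < m + 1 := by positivity
  set y := x / (m + 1)
  have hGamma : (m + 1)! * ((m : ℝ) + 1) ^ θ ≤ (s + 1) * Gamma (s + 1) := by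
    have h := Real.Gamma_mul_rpow_le_Gamma_nat_add (n := m + 2) (by omega) hθ0
    rw [← Gamma_add_one (by positivity)]
    convert h using 2
    · rw [← Gamma_nat_eq_factorial]; push_cast; ring_nf
    · push_cast; ring_nf
    · push_cast; ring
  have hpow : x ^ s = x ^ m * ((m : ℝ) + 1) ^ θ * y ^ θ := by
    have hsplit : x ^ s = x ^ (m : ℝ) * x ^ θ := by
      rw [← rpow_add_of_nonneg hx (Nat.cast_nonneg _) hθ0, hθ, add_sub_cancel]
    have : ((m : ℝ) + 1) ^ θ ≠ 0 := (rpow_pos_of_pos hm1 θ).ne'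
    rw [hsplit, rpow_natCast, div_rpow hx hm1.le]
    field_simp
  have hy : y ^ θ ≤ 1 + y := by
    have hy0 : 0 ≤ y := by positivity
    have h := rpow_one_add_le_one_add_mul_self (s := y - 1) (by linarith) hθ0 hθ1
    rw [add_sub_cancel] at h
    nlinarith
  calc x ^ s / Gamma (s + 1)
      = (s + 1) * x ^ s / ((s + 1) * Gamma (s + 1)) := by
        rw [mul_div_mul_left _ _ (by positivity)]
    _ ≤ (m + 2) * (x ^ m * ((m : ℝ) + 1) ^ θ * y ^ θ) / ((m + 1)! * ((m : ℝ) + 1) ^ θ) := by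
        have hs1 : s + 1 ≤ m + 2 := by linarith [Nat.lt_floor_add_one s]
        rw [hpow]
        gcongr
    _ = (m + 2) / (m + 1) * (x ^ m / m !) * y ^ θ := by
        rw [Nat.factorial_succ]; push_cast
        field_simp
    _ ≤ 2 * (x ^ m / m !) * (1 + y) := by
        gcongr
        rw [div_le_iff₀ hm1]; linarith [(Nat.cast_nonneg m : (0 : ℝ) ≤ m)]
    _ = 2 * (x ^ m / m ! + x ^ (m + 1) / (m + 1)!) := by
        rw [Nat.factorial_succ]; push_cast
        simp only [y]
        field_simp
        ring

theorem tsum_rpow_div_Gamma_add_one_le {x : ℝ} (hx : 0 ≤ x) {s : ℕ → ℝ} (hs0 : ∀ k, 0 ≤ s k)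
    (hs : ∀ k, s k + 1 ≤ s (k + 1)) :
    ∑' k, x ^ s k / Gamma (s k + 1) ≤ 4 * exp x := by
  set g : ℕ → ℝ := fun n ↦ x ^ n / (n ! : ℝ)
  have hg : HasSum g (exp x) := by
    rw [exp_eq_exp_ℝ]; exact NormedSpace.expSeries_div_hasSum_exp x
  have hg0 : ∀ n, 0 ≤ g n := fun n ↦ by positivity
  have hfloor : StrictMono fun k ↦ ⌊s k⌋₊ := strictMono_nat_of_lt_succ fun k ↦ by
    calc ⌊s k⌋₊ < ⌊s k⌋₊ + 1 := Nat.lt_succ_self _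
      _ = ⌊s k + 1⌋₊ := (Nat.floor_add_one (hs0 k)).symm
      _ ≤ ⌊s (k + 1)⌋₊ := Nat.floor_mono (hs k)
  have hfloor_succ : StrictMono fun k ↦ ⌊s k⌋₊ + 1 := fun a b h ↦ by simpa using hfloor h
  have hsum₁ : Summable fun k ↦ g ⌊s k⌋₊ := hg.summable.comp_injective hfloor.injective
  have hsum₂ : Summable fun k ↦ g (⌊s k⌋₊ + 1) :=
    hg.summable.comp_injective hfloor_succ.injective
  have hle₁ : ∑' k, g ⌊s k⌋₊ ≤ exp x :=
    hg.tsum_eq ▸ tsum_comp_le_tsum_of_inj hg.summable hg0 hfloor.injective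
  have hle₂ : ∑' k, g (⌊s k⌋₊ + 1) ≤ exp x :=
    hg.tsum_eq ▸ tsum_comp_le_tsum_of_inj hg.summable hg0 hfloor_succ.injective
  have hbound : Summable fun k ↦ 2 * (g ⌊s k⌋₊ + g (⌊s k⌋₊ + 1)) := (hsum₁.add hsum₂).mul_left 2
  calc ∑' k, x ^ s k / Gamma (s k + 1)
      ≤ ∑' k, 2 * (g ⌊s k⌋₊ + g (⌊s k⌋₊ + 1)) := by
        refine Summable.tsum_le_tsum (fun k ↦ rpow_div_Gamma_add_one_le hx (hs0 k)) ?_ hbound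
        refine hbound.of_nonneg_of_le (fun k ↦ ?_) (fun k ↦ rpow_div_Gamma_add_one_le hx (hs0 k))
        have := Gamma_pos_of_pos (by linarith [hs0 k] : 0 < s k + 1)
        positivity
    _ = 2 * (∑' k, g ⌊s k⌋₊ + ∑' k, g (⌊s k⌋₊ + 1)) := by
        rw [tsum_mul_left, hsum₁.tsum_add hsum₂]
    _ ≤ 2 * (exp x + exp x) := by gcongr
    _ = 4 * exp x := by ring

theorem rpow_sub_one_mul_pow_eq {β lam t : ℝ} (hβ : β ≠ 0) (hlam : 0 < lam) (ht : 0 < t) (k : ℕ) :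
    t ^ (β - 1) * (lam * t ^ β) ^ k =
      lam ^ ((1 - β) / β) * (lam ^ (1 / β) * t) ^ (β * k + β - 1) := by
  rw [mul_rpow (by positivity) ht.le, ← rpow_mul hlam.le, ← mul_assoc, ← rpow_add hlam, mul_pow,
    ← rpow_natCast, ← rpow_natCast, ← rpow_mul ht.le]
  have hexp : (1 - β) / β + 1 / β * (β * k + β - 1) = k := by field_simp; ring
  rw [hexp, show β * k + β - 1 = (β - 1) + β * k by ring, rpow_add ht]
  ring

theorem rpow_sub_one_mul_mittagLeffler_le {β lam t : ℝ} (hβ : 1 < β) (hlam : 0 < lam)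
    (ht : 0 ≤ t) :
    t ^ (β - 1) * mittagLeffler β β (lam * t ^ β) ≤
      4 * lam ^ ((1 - β) / β) * exp (lam ^ (1 / β) * t) := by
  rcases ht.eq_or_lt with rfl | ht
  · rw [zero_rpow (by linarith : β - 1 ≠ 0), zero_mul]
    positivity
  set x := lam ^ (1 / β) * t
  have hx : 0 < x := by positivity
  calc t ^ (β - 1) * mittagLeffler β β (lam * t ^ β)
      = lam ^ ((1 - β) / β) * ∑' k : ℕ, x ^ (β * k + β - 1) / Gamma (β * k + β - 1 + 1) := by
        simp only [mittagLeffler, sub_add_cancel, ← tsum_mul_left, ← mul_div_assoc,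
          rpow_sub_one_mul_pow_eq (by positivity : β ≠ 0) hlam ht]
        rfl
    _ ≤ lam ^ ((1 - β) / β) * (4 * exp x) := by
        gcongr
        refine tsum_rpow_div_Gamma_add_one_le hx.le (fun k ↦ ?_) (fun k ↦ ?_)
        · nlinarith [(Nat.cast_nonneg k : (0 : ℝ) ≤ k)]
        · push_cast; linarith
    _ = 4 * lam ^ ((1 - β) / β) * exp x := by ring

theorem mittagLeffler_beta_upper_bound_general (β a lam₁ : ℝ) (hβ1 : 1 < β) (hlam₁ : 0 < lam₁) :
    ∃ C₃ : ℝ, 0 < C₃ ∧ ∀ lam : ℝ, lam₁ ≤ lam → ∀ t ∈ Set.Icc (0 : ℝ) a,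
      t ^ (β - 1) * mittagLeffler β β (lam * t ^ β) ≤ C₃ * Real.exp (lam ^ (1 / β) * t) := by
  refine ⟨4 * lam₁ ^ ((1 - β) / β), by positivity, fun lam hlam t ht ↦ ?_⟩
  have hexp : (1 - β) / β ≤ 0 := div_nonpos_of_nonpos_of_nonneg (by linarith) (by linarith)
  calc t ^ (β - 1) * mittagLeffler β β (lam * t ^ β)
      ≤ 4 * lam ^ ((1 - β) / β) * exp (lam ^ (1 / β) * t) :=
        rpow_sub_one_mul_mittagLeffler_le hβ1 (hlam₁.trans_le hlam) ht.1
    _ ≤ 4 * lam₁ ^ ((1 - β) / β) * exp (lam ^ (1 / β) * t) := by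
        gcongr 4 * ?_ * _
        exact rpow_le_rpow_of_nonpos hlam₁ hlam hexp

/-- for `1 < β < 2`, `a > 0`, `λ₁ > 0` there is `C₃ > 0` (depending only on
`β, a, λ₁`) with `t^{β−1} · E_{β,β}(λ t^β) ≤ C₃ · exp(λ^{1/β} t)` for all `λ ≥ λ₁`,
`t ∈ [0,a]`. -/
theorem mittagLeffler_beta_upper_bound (β a lam₁ : ℝ) (hβ1 : 1 < β) (hβ2 : β < 2)
    (ha : 0 < a) (hlam₁ : 0 < lam₁) :
    ∃ C₃ : ℝ, 0 < C₃ ∧ ∀ lam : ℝ, lam₁ ≤ lam → ∀ t ∈ Set.Icc (0 : ℝ) a,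
      t ^ (β - 1) * mittagLeffler β β (lam * t ^ β) ≤ C₃ * Real.exp (lam ^ (1 / β) * t) :=
  mittagLeffler_beta_upper_bound_general β a lam₁ hβ1 hlam₁
end

section
/- Let β ∈ (1,2), a > 0, and let C₃ > 0 be a constant such that s^{β−1} E_{β,β}(p² s^β) ≤ C₃ exp(p^{2/β} s) for every integer p ≥ 1 and every s ∈ [0, a]. Fix U ∈ ℓ² and define the map H on C([0,a]; ℓ²) coordinatewise by (Hv)(t)_p = E_{β,1}(p² t^β) U_p + ∫_0^t (t−η)^{β−1} E_{β,β}(p² (t−η)^β) · (exp(p^{2/β}(η − a)) / (2 a C₃)) · v(η)_p dη. Then for all v₁, v₂ ∈ C([0,a]; ℓ²) one has ‖H v₁ − H v₂‖_C ≤ (1/2) ‖v₁ − v₂‖_C; consequently H has a unique fixed point V ∈ C([0,a]; ℓ²). -/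
/-!
The hypothesis on `C₃` bounds the kernel of `H` in every coordinate by `1/(2a)` on
`0 ≤ η ≤ t ≤ a`, since the two exponential factors combine to `exp(p^{2/β}(t - a)) ≤ 1`.
Hence the `p`-th coordinate of `(H v₁ - H v₂)(t)` is at most `(1/(2a)) ∫_0^t |(v₁ - v₂)(η)_p| dη`,
and Minkowski's integral inequality in `ℓ²` (the Bochner integral of the coordinatewise absolute
values of `v₁ - v₂`) bounds its norm by `(t/(2a)) ‖v₁ - v₂‖_C ≤ ‖v₁ - v₂‖_C / 2`. Banach's fixed
point theorem in the complete space `C([0,a]; ℓ²)` gives the unique fixed point.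
-/

open Real MeasureTheory
open scoped ENNReal

lemma mittagLeffler_nonneg {β γ z : ℝ} (hβ : 0 ≤ β) (hγ : 0 < γ) (hz : 0 ≤ z) :
    0 ≤ mittagLeffler β γ z :=
  tsum_nonneg fun k => div_nonneg (pow_nonneg hz k) (Gamma_pos_of_pos (by positivity)).le

@[fun_prop]
lemma measurable_mittagLeffler (β γ : ℝ) : Measurable (mittagLeffler β γ) :=
  Measurable.tsum fun k => by fun_prop

namespace lp

variable {α : Type*} {E : α → Type*} [∀ i, NormedAddCommGroup (E i)] {p : ℝ≥0∞}

def pointwiseNorm (x : lp E p) : lp (fun _ : α => ℝ) p :=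
  ⟨fun i => ‖x i‖, (lp.memℓp x).norm⟩

@[simp]
lemma pointwiseNorm_apply (x : lp E p) (i : α) : pointwiseNorm x i = ‖x i‖ := rfl

lemma norm_pointwiseNorm (hp : p ≠ 0) (x : lp E p) : ‖pointwiseNorm x‖ = ‖x‖ :=
  le_antisymm (norm_mono hp fun i => by simp) (norm_mono hp fun i => by simp)

lemma lipschitzWith_one_pointwiseNorm [Fact (1 ≤ p)] :
    LipschitzWith 1 (pointwiseNorm : lp E p → lp (fun _ : α => ℝ) p) :=
  .mk_one fun x y => by
    simp_rw [dist_eq_norm]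
    refine norm_mono (zero_lt_one.trans_le Fact.out).ne' fun i => ?_
    simpa using abs_norm_sub_norm_le (x i) (y i)

theorem norm_le_of_norm_apply_le_integral [Fact (1 ≤ p)] {F : α → Type*}
    [∀ i, NormedAddCommGroup (F i)] {x : lp F p} {w : ℝ → lp E p} (hw : Continuous w)
    {T c M : ℝ} (hT : 0 ≤ T) (hc : 0 ≤ c) (hwM : ∀ η ∈ Set.Ioc 0 T, ‖w η‖ ≤ M)
    (hx : ∀ i, ‖x i‖ ≤ c * ∫ η in 0..T, ‖w η i‖) : ‖x‖ ≤ c * (M * T) := by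
  have hp : p ≠ 0 := (zero_lt_one.trans_le Fact.out).ne'
  set y : lp (fun _ : α => ℝ) p := ∫ η in 0..T, pointwiseNorm (w η)
  have hy : ∀ i, y i = ∫ η in 0..T, ‖w η i‖ := fun i =>
    ((evalCLM ℝ _ p i).intervalIntegral_comp_comm
      ((lipschitzWith_one_pointwiseNorm.continuous.comp hw).intervalIntegrable 0 T)).symm
  have hyM : ‖y‖ ≤ M * T := by
    have := intervalIntegral.norm_integral_le_of_norm_le_const fun η hη =>
      (norm_pointwiseNorm hp (w η)).trans_le (hwM η (by rwa [Set.uIoc_of_le hT] at hη))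
    rwa [sub_zero, abs_of_nonneg hT] at this
  calc ‖x‖ ≤ ‖c • y‖ := norm_mono hp fun i => by
        rw [coeFn_smul, Pi.smul_apply, hy, norm_smul, Real.norm_of_nonneg hc,
          Real.norm_of_nonneg (intervalIntegral.integral_nonneg hT fun _ _ => norm_nonneg _)]
        exact hx i
    _ = c * ‖y‖ := by rw [norm_smul, Real.norm_of_nonneg hc]
    _ ≤ c * (M * T) := by gcongr

end lp

/-- The kernel of `H` in the `p`-th coordinate, with `q = p`. -/
noncomputable def illposednessKernel (β a C₃ q t η : ℝ) : ℝ :=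
  (t - η) ^ (β - 1) * mittagLeffler β β (q ^ 2 * (t - η) ^ β) *
    (exp (q ^ (2 / β) * (η - a)) / (2 * a * C₃))

section Kernel

variable {β a C₃ q : ℝ}

lemma abs_illposednessKernel_le (hβ : 0 < β) (ha : 0 < a) (hC₃ : 0 < C₃) (hq : 0 ≤ q)
    (hbound : ∀ s ∈ Set.Icc 0 a,
      s ^ (β - 1) * mittagLeffler β β (q ^ 2 * s ^ β) ≤ C₃ * exp (q ^ (2 / β) * s))
    {t η : ℝ} (ht : t ≤ a) (hη : η ∈ Set.Icc 0 t) :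
    |illposednessKernel β a C₃ q t η| ≤ 1 / (2 * a) := by
  obtain ⟨s, hs, rfl⟩ : ∃ s ∈ Set.Icc 0 a, t = η + s :=
    ⟨t - η, ⟨by linarith [hη.2], by linarith [hη.1]⟩, by ring⟩
  have hs0 : 0 ≤ s := hs.1
  have hts : η + s - η = s := by ring
  have hML := mittagLeffler_nonneg hβ.le hβ (by positivity : 0 ≤ q ^ 2 * s ^ β)
  unfold illposednessKernel
  rw [hts, abs_of_nonneg (by positivity)]
  calc s ^ (β - 1) * mittagLeffler β β (q ^ 2 * s ^ β) *
        (exp (q ^ (2 / β) * (η - a)) / (2 * a * C₃))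
      ≤ C₃ * exp (q ^ (2 / β) * s) * (exp (q ^ (2 / β) * (η - a)) / (2 * a * C₃)) := by
        gcongr ?_ * _; exact hbound s hs
    _ = exp (q ^ (2 / β) * (η + s - a)) / (2 * a) := by
        rw [show q ^ (2 / β) * (η + s - a) = q ^ (2 / β) * s + q ^ (2 / β) * (η - a) by ring,
          exp_add]
        field_simp
    _ ≤ 1 / (2 * a) := by
        gcongr
        exact exp_le_one_iff.2 (mul_nonpos_of_nonneg_of_nonpos (by positivity) (by linarith))

lemma intervalIntegrable_illposednessKernel_mul (hβ : 0 < β) (ha : 0 < a) (hC₃ : 0 < C₃)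
    (hq : 0 ≤ q) (hbound : ∀ s ∈ Set.Icc 0 a,
      s ^ (β - 1) * mittagLeffler β β (q ^ 2 * s ^ β) ≤ C₃ * exp (q ^ (2 / β) * s))
    {t : ℝ} (ht : t ∈ Set.Icc 0 a) {f : ℝ → ℝ} (hf : Continuous f) :
    IntervalIntegrable (fun η => illposednessKernel β a C₃ q t η * f η) volume 0 t := by
  refine IntervalIntegrable.mul_continuousOn ?_ hf.continuousOn
  rw [intervalIntegrable_iff_integrableOn_Ioc_of_le ht.1]
  refine Measure.integrableOn_of_bounded (M := 1 / (2 * a)) measure_Ioc_lt_top.ne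
    (by unfold illposednessKernel; fun_prop) ?_
  rw [ae_restrict_iff' measurableSet_Ioc]
  exact ae_of_all _ fun η hη =>
    abs_illposednessKernel_le hβ ha hC₃ hq hbound ht.2 (Set.Ioc_subset_Icc_self hη)

end Kernel

local notation "ℓ²" => lp (fun _ : ℕ+ => ℝ) 2

section Map

variable {β a C₃ : ℝ} {U : ℓ²} {H : C(Set.Icc (0 : ℝ) a, ℓ²) → C(Set.Icc (0 : ℝ) a, ℓ²)}

lemma continuous_apply_projIcc (ha : 0 < a) (v : C(Set.Icc (0 : ℝ) a, ℓ²)) (p : ℕ+) :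
    Continuous fun η => v (Set.projIcc 0 a ha.le η) p :=
  (lp.lipschitzWith_one_eval 2 p).continuous.comp (v.continuous.comp continuous_projIcc)

theorem norm_sub_apply_le_integral (hβ : 0 < β) (ha : 0 < a) (hC₃ : 0 < C₃)
    (hC₃bound : ∀ p : ℕ+, ∀ s ∈ Set.Icc (0 : ℝ) a,
      s ^ (β - 1) * mittagLeffler β β ((p : ℝ) ^ 2 * s ^ β) ≤
        C₃ * exp ((p : ℝ) ^ (2 / β) * s))
    (hH : ∀ v : C(Set.Icc (0 : ℝ) a, ℓ²), ∀ t : Set.Icc (0 : ℝ) a, ∀ p : ℕ+,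
        H v t p = mittagLeffler β 1 ((p : ℝ) ^ 2 * (t : ℝ) ^ β) * U p +
          ∫ η in (0 : ℝ)..(t : ℝ),
            illposednessKernel β a C₃ p t η * v (Set.projIcc 0 a ha.le η) p)
    (v₁ v₂ : C(Set.Icc (0 : ℝ) a, ℓ²)) (t : Set.Icc (0 : ℝ) a) (p : ℕ+) :
    ‖(H v₁ - H v₂) t p‖ ≤
      1 / (2 * a) * ∫ η in (0 : ℝ)..(t : ℝ), ‖(v₁ - v₂) (Set.projIcc 0 a ha.le η) p‖ := by
  have hint v := intervalIntegrable_illposednessKernel_mul hβ ha hC₃ (Nat.cast_nonneg p)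
    (hC₃bound p) t.2 (continuous_apply_projIcc ha v p)
  have hdiff : (H v₁ - H v₂) t p =
      ∫ η in (0 : ℝ)..(t : ℝ),
        illposednessKernel β a C₃ p t η * (v₁ - v₂) (Set.projIcc 0 a ha.le η) p := by
    rw [ContinuousMap.sub_apply, lp.coeFn_sub, Pi.sub_apply, hH, hH, add_sub_add_left_eq_sub,
      ← intervalIntegral.integral_sub (hint v₁) (hint v₂)]
    simp [mul_sub]
  rw [hdiff, ← intervalIntegral.integral_const_mul]
  refine intervalIntegral.norm_integral_le_of_norm_le t.2.1 (ae_of_all _ fun η hη => ?_)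
    ((continuous_apply_projIcc ha _ p).norm.const_mul _ |>.intervalIntegrable _ _)
  rw [norm_mul, Real.norm_eq_abs]
  gcongr
  exact abs_illposednessKernel_le hβ ha hC₃ (Nat.cast_nonneg p) (hC₃bound p) t.2.2
    (Set.Ioc_subset_Icc_self hη)

theorem norm_sub_le_half (hβ : 0 < β) (ha : 0 < a) (hC₃ : 0 < C₃)
    (hC₃bound : ∀ p : ℕ+, ∀ s ∈ Set.Icc (0 : ℝ) a,
      s ^ (β - 1) * mittagLeffler β β ((p : ℝ) ^ 2 * s ^ β) ≤
        C₃ * exp ((p : ℝ) ^ (2 / β) * s))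
    (hH : ∀ v : C(Set.Icc (0 : ℝ) a, ℓ²), ∀ t : Set.Icc (0 : ℝ) a, ∀ p : ℕ+,
        H v t p = mittagLeffler β 1 ((p : ℝ) ^ 2 * (t : ℝ) ^ β) * U p +
          ∫ η in (0 : ℝ)..(t : ℝ),
            illposednessKernel β a C₃ p t η * v (Set.projIcc 0 a ha.le η) p)
    (v₁ v₂ : C(Set.Icc (0 : ℝ) a, ℓ²)) :
    ‖H v₁ - H v₂‖ ≤ 1 / 2 * ‖v₁ - v₂‖ := by
  refine (ContinuousMap.norm_le _ (by positivity)).2 fun t => ?_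
  calc ‖(H v₁ - H v₂) t‖ ≤ 1 / (2 * a) * (‖v₁ - v₂‖ * t) :=
        lp.norm_le_of_norm_apply_le_integral ((v₁ - v₂).continuous.comp continuous_projIcc)
          t.2.1 (by positivity) (fun η _ => (v₁ - v₂).norm_coe_le_norm _)
          (norm_sub_apply_le_integral hβ ha hC₃ hC₃bound hH v₁ v₂ t)
    _ ≤ 1 / (2 * a) * (‖v₁ - v₂‖ * a) := by gcongr; exact t.2.2
    _ = 1 / 2 * ‖v₁ - v₂‖ := by field_simp

end Map

theorem contraction_of_illposedness_map_general (β a C₃ : ℝ) (hβ1 : 1 < β) (ha : 0 < a)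
    (hC₃ : 0 < C₃)
    (hC₃bound : ∀ p : ℕ+, ∀ s ∈ Set.Icc (0 : ℝ) a,
      s ^ (β - 1) * mittagLeffler β β ((p : ℝ) ^ 2 * s ^ β) ≤
        C₃ * Real.exp ((p : ℝ) ^ (2 / β) * s))
    (U : lp (fun _ : ℕ+ => ℝ) 2)
    (H : C(Set.Icc (0 : ℝ) a, lp (fun _ : ℕ+ => ℝ) 2) →
         C(Set.Icc (0 : ℝ) a, lp (fun _ : ℕ+ => ℝ) 2))
    (hH : ∀ v : C(Set.Icc (0 : ℝ) a, lp (fun _ : ℕ+ => ℝ) 2),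
      ∀ t : Set.Icc (0 : ℝ) a, ∀ p : ℕ+,
        H v t p = mittagLeffler β 1 ((p : ℝ) ^ 2 * (t : ℝ) ^ β) * U p +
          ∫ η in (0 : ℝ)..(t : ℝ),
            ((t : ℝ) - η) ^ (β - 1) * mittagLeffler β β ((p : ℝ) ^ 2 * ((t : ℝ) - η) ^ β) *
              (Real.exp ((p : ℝ) ^ (2 / β) * (η - a)) / (2 * a * C₃)) *
              v (Set.projIcc 0 a ha.le η) p) :
    (∀ v₁ v₂ : C(Set.Icc (0 : ℝ) a, lp (fun _ : ℕ+ => ℝ) 2),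
      ‖H v₁ - H v₂‖ ≤ (1 / 2) * ‖v₁ - v₂‖) ∧
    (∃! V : C(Set.Icc (0 : ℝ) a, lp (fun _ : ℕ+ => ℝ) 2), H V = V) := by
  have hhalf := norm_sub_le_half (by linarith) ha hC₃ hC₃bound hH
  have hcontr : ContractingWith (1 / 2) H :=
    ⟨by norm_num, .of_dist_le_mul fun v₁ v₂ => by simpa [dist_eq_norm] using hhalf v₁ v₂⟩
  exact ⟨hhalf, hcontr.fixedPoint H, hcontr.fixedPoint_isFixedPt,
    fun _ hV => hcontr.fixedPoint_unique hV⟩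

/-- with `β ∈ (1,2)`, `a > 0`, a constant `C₃ > 0` such that
`s^{β−1} E_{β,β}(p² s^β) ≤ C₃ exp(p^{2/β} s)` for all integers `p ≥ 1` and `s ∈ [0,a]`,
`U ∈ ℓ²`, and `H` on `C([0,a]; ℓ²)` given coordinatewise by
`(Hv)(t)_p = E_{β,1}(p² t^β) U_p + ∫_0^t (t−η)^{β−1} E_{β,β}(p²(t−η)^β)
  · (exp(p^{2/β}(η−a))/(2aC₃)) · v(η)_p dη`,
`H` is a `1/2`-contraction and has a unique fixed point. -/
theorem contraction_of_illposedness_map (β a C₃ : ℝ) (hβ1 : 1 < β) (hβ2 : β < 2) (ha : 0 < a)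
    (hC₃ : 0 < C₃)
    (hC₃bound : ∀ p : ℕ+, ∀ s ∈ Set.Icc (0 : ℝ) a,
      s ^ (β - 1) * mittagLeffler β β ((p : ℝ) ^ 2 * s ^ β) ≤
        C₃ * Real.exp ((p : ℝ) ^ (2 / β) * s))
    (U : lp (fun _ : ℕ+ => ℝ) 2)
    (H : C(Set.Icc (0 : ℝ) a, lp (fun _ : ℕ+ => ℝ) 2) →
         C(Set.Icc (0 : ℝ) a, lp (fun _ : ℕ+ => ℝ) 2))
    (hH : ∀ v : C(Set.Icc (0 : ℝ) a, lp (fun _ : ℕ+ => ℝ) 2),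
      ∀ t : Set.Icc (0 : ℝ) a, ∀ p : ℕ+,
        H v t p = mittagLeffler β 1 ((p : ℝ) ^ 2 * (t : ℝ) ^ β) * U p +
          ∫ η in (0 : ℝ)..(t : ℝ),
            ((t : ℝ) - η) ^ (β - 1) * mittagLeffler β β ((p : ℝ) ^ 2 * ((t : ℝ) - η) ^ β) *
              (Real.exp ((p : ℝ) ^ (2 / β) * (η - a)) / (2 * a * C₃)) *
              v (Set.projIcc 0 a ha.le η) p) :
    (∀ v₁ v₂ : C(Set.Icc (0 : ℝ) a, lp (fun _ : ℕ+ => ℝ) 2),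
      ‖H v₁ - H v₂‖ ≤ (1 / 2) * ‖v₁ - v₂‖) ∧
    (∃! V : C(Set.Icc (0 : ℝ) a, lp (fun _ : ℕ+ => ℝ) 2), H V = V) :=
  contraction_of_illposedness_map_general β a C₃ hβ1 ha hC₃ hC₃bound U H hH
end
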